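/- Suppose the sequences κ, κ′, d : ℕ → (0,∞) satisfy the Antonets–Zhislin–Shereshevskij conditions. Let Z be a partition of {1,…,N} with 2 ≤ |Z|, and let C ⊆ {1,…,N} be a nonempty cluster which is not contained in any single cluster of Z. Then for every partition Z̃ of {1,…,N} which has C as one of its clusters and satisfies |Z̃| ≥ |Z|, one has K(Z̃, κ(|Z̃|)) ∩ M(Z,κ′,κ) = ∅. -/

import Mathlib

/-! Pick particles `i, j ∈ C` lying in different clusters `Ca`, `Cb` of `Z`, and a third particle
outside `C`, so that `M ≥ 3m`. Merging `Ca` and `Cb` gives a partition `Z′` of order `|Z| − 1`,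
and a point of `M(Z,κ′,κ)` lies outside its cone, so `|P₀(Z′)x|²` is large compared with
`|P_c(Z′)x|²`. By orthogonality `|P₀(Z′)x|² = |P₀(Z)x|² + |P_c(Z)x − P_c(Z′)x|²`; the first term
is small by the cone of `Z`, and the second is at most `M·|x_c[Ca] − x_c[Cb]|²`. Going from
`x_c[Ca]` to `x_c[Cb]` through `xᵢ`, `x_c[C]` and `xⱼ` bounds that distance by the internal
motions with respect to `Z` and `Z̃`, which both cones keep below `κ(|Z|)²|x|²` (`κ` decreases).
The Antonets–Zhislin–Shereshevskij inequalities make these estimates incompatible once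
`M ≥ 3m`. -/

open MeasureTheory Finset

open scoped RealInnerProductSpace

noncomputable section

/-- The one-particle space `ℝⁿ`. -/
abbrev Pt (n : ℕ) := EuclideanSpace ℝ (Fin n)

/-- The configuration space `X = (ℝⁿ)^N`. -/
abbrev Conf (N n : ℕ) := Fin N → Pt n

/-- The mass inner product `⟨x,y⟩_m = ∑ i mᵢ ⟨xᵢ, yᵢ⟩`. -/
def minner {N n : ℕ} (mass : Fin N → ℝ) (x y : Conf N n) : ℝ :=
  ∑ i, mass i * ⟪x i, y i⟫

/-- The mass norm `|x|_m`. -/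
def mnorm {N n : ℕ} (mass : Fin N → ℝ) (x : Conf N n) : ℝ :=
  Real.sqrt (minner mass x x)

/-- The space `X₀` of relative positions: `∑ i mᵢ xᵢ = 0`. -/
def X0 {N n : ℕ} (mass : Fin N → ℝ) : Set (Conf N n) :=
  {x | ∑ i, mass i • x i = 0}

/-- Total mass `M[C]` of a cluster `C`. -/
def cmass {N : ℕ} (mass : Fin N → ℝ) (C : Finset (Fin N)) : ℝ := ∑ i ∈ C, mass i

/-- Center of mass `x_c[C]` of the cluster `C`. -/
def com {N n : ℕ} (mass : Fin N → ℝ) (C : Finset (Fin N)) (x : Conf N n) : Pt n :=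
  (cmass mass C)⁻¹ • ∑ i ∈ C, mass i • x i

/-- The `⟨·,·⟩_m`-orthogonal projection `P₀[C]` of `X₀` onto `X₀[C]`:
explicitly, `(P₀[C]x)ᵢ = xᵢ − x_c[C]` for `i ∈ C` and `0` otherwise. -/
def P0C {N n : ℕ} (mass : Fin N → ℝ) (C : Finset (Fin N)) (x : Conf N n) : Conf N n :=
  fun i => if i ∈ C then x i - com mass C x else 0

/-- A partition (cluster decomposition) of the `N`-particle system. -/
abbrev Partn (N : ℕ) := Finpartition (Finset.univ : Finset (Fin N))

/-- The `⟨·,·⟩_m`-orthogonal projection `P_c(Z)` of `X₀` onto `X_c(Z) = X₀ ⊖ X₀(Z)`: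
explicitly, `(P_c(Z)x)ᵢ = x_c[C]` where `C` is the cluster of `Z` containing `i`. -/
def PcZ {N n : ℕ} (mass : Fin N → ℝ) (Z : Partn N) (x : Conf N n) : Conf N n :=
  fun i => ∑ C ∈ Z.parts, if i ∈ C then com mass C x else 0

/-- The `⟨·,·⟩_m`-orthogonal projection `P₀(Z)` of `X₀` onto `X₀(Z) = ⊕_{C ∈ Z} X₀[C]`. -/
def P0Z {N n : ℕ} (mass : Fin N → ℝ) (Z : Partn N) (x : Conf N n) : Conf N n :=
  x - PcZ mass Z x

/-- The cone `K(Z,κ) = {x ∈ X₀ : |P₀(Z)x|_m ≤ κ|P_c(Z)x|_m}` for `|Z| > 1`;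
for the trivial partition (`|Z| = 1`), `K(Z,κ) = {x ∈ X₀ : |x|_m ≤ κ}`. -/
def cone {N n : ℕ} (mass : Fin N → ℝ) (Z : Partn N) (κ : ℝ) : Set (Conf N n) :=
  if 1 < Z.parts.card then
    {x ∈ X0 mass | mnorm mass (P0Z mass Z x) ≤ κ * mnorm mass (PcZ mass Z x)}
  else
    {x ∈ X0 mass | mnorm mass x ≤ κ}

/-- The total mass `M = ∑ i mᵢ`. -/
def totalMass {N : ℕ} (mass : Fin N → ℝ) : ℝ := ∑ i, mass i

/-- The minimal mass `m = minᵢ mᵢ`. -/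
def minMass {N : ℕ} (mass : Fin N → ℝ) : ℝ := ⨅ i, mass i

/-- The Antonets–Zhislin–Shereshevskij conditions on the sequences `κ, κ′, d : ℕ → (0,∞)`:
for every `l ≥ 1`, `0 < κ′(l) < κ(l)` and
`(m³/M³)·(κ′(l)² − κ(l+1)²)/(1 + κ′(l)²) − κ(l+1)² > d(l+1)² > κ(l+1)²(1 + κ(l+1)²)`. -/
def AZS {N : ℕ} (mass : Fin N → ℝ) (κ κ' dd : ℕ → ℝ) : Prop :=
  (∀ l, 0 < κ l ∧ 0 < κ' l ∧ 0 < dd l) ∧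
  ∀ l, 1 ≤ l →
    κ' l < κ l ∧
    (minMass mass ^ 3 / totalMass mass ^ 3) *
        ((κ' l ^ 2 - κ (l + 1) ^ 2) / (1 + κ' l ^ 2)) - κ (l + 1) ^ 2
      > dd (l + 1) ^ 2 ∧
    dd (l + 1) ^ 2 > κ (l + 1) ^ 2 * (1 + κ (l + 1) ^ 2)

/-- The region `M(Z,κ′,κ) = K(Z,κ(|Z|)) \ ⋃_{|Z′| < |Z|} K(Z′,κ′(|Z′|))`. -/
def Mreg {N n : ℕ} (mass : Fin N → ℝ) (κ' κ : ℕ → ℝ) (Z : Partn N) : Set (Conf N n) :=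
  cone mass Z (κ Z.parts.card) \
    ⋃ (Z' : Partn N) (_ : Z'.parts.card < Z.parts.card), cone mass Z' (κ' Z'.parts.card)

section MassInner
variable {N n : ℕ} {mass : Fin N → ℝ}

lemma minner_self_eq_sum (x : Conf N n) : minner mass x x = ∑ i, mass i * ‖x i‖ ^ 2 := by
  simp only [minner, real_inner_self_eq_norm_sq]

lemma minner_self_nonneg (hm : ∀ i, 0 ≤ mass i) (x : Conf N n) : 0 ≤ minner mass x x := by
  rw [minner_self_eq_sum]
  exact sum_nonneg fun i _ => mul_nonneg (hm i) (sq_nonneg _)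

lemma minner_add_self_of_minner_eq_zero {a b : Conf N n} (h : minner mass a b = 0) :
    minner mass (a + b) (a + b) = minner mass a a + minner mass b b := by
  have hexp : minner mass (a + b) (a + b)
      = minner mass a a + 2 * minner mass a b + minner mass b b := by
    simp only [minner, Pi.add_apply, inner_add_left, inner_add_right, real_inner_comm (b _),
      mul_add, sum_add_distrib]
    ring
  rw [hexp, h, mul_zero, add_zero]

lemma mnorm_le_mul_mnorm_iff (hm : ∀ i, 0 ≤ mass i) {c : ℝ} (hc : 0 ≤ c) (a b : Conf N n) :
    mnorm mass a ≤ c * mnorm mass b ↔ minner mass a a ≤ c ^ 2 * minner mass b b := by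
  rw [mnorm, mnorm, ← Real.sqrt_le_sqrt_iff (mul_nonneg (sq_nonneg c) (minner_self_nonneg hm b)),
    Real.sqrt_mul (sq_nonneg c), Real.sqrt_sq hc]

end MassInner

section Masses
variable {N : ℕ} {mass : Fin N → ℝ}

lemma minMass_le (i : Fin N) : minMass mass ≤ mass i :=
  ciInf_le (Set.finite_range mass).bddBelow i

lemma minMass_pos [Nonempty (Fin N)] (hm : ∀ i, 0 < mass i) : 0 < minMass mass := by
  obtain ⟨i, hi⟩ := Finite.exists_min mass
  exact (hm i).trans_le (le_ciInf hi)

lemma totalMass_pos [Nonempty (Fin N)] (hm : ∀ i, 0 < mass i) : 0 < totalMass mass :=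
  sum_pos (fun i _ => hm i) univ_nonempty

lemma card_mul_minMass_le_totalMass (hm : ∀ i, 0 ≤ mass i) (s : Finset (Fin N)) :
    #s * minMass mass ≤ totalMass mass :=
  calc (#s : ℝ) * minMass mass = ∑ _ ∈ s, minMass mass := by rw [sum_const, nsmul_eq_mul]
    _ ≤ ∑ i ∈ s, mass i := sum_le_sum fun i _ => minMass_le i
    _ ≤ totalMass mass := sum_le_sum_of_subset_of_nonneg (subset_univ s) fun i _ _ => hm i

lemma three_mul_minMass_le_totalMass (hm : ∀ i, 0 < mass i) {i j k : Fin N} (hij : i ≠ j)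
    (hik : i ≠ k) (hjk : j ≠ k) : 3 * minMass mass ≤ totalMass mass := by
  have h := card_mul_minMass_le_totalMass (fun l => (hm l).le) {i, j, k}
  rwa [card_eq_three.2 ⟨i, j, k, hij, hik, hjk, rfl⟩, Nat.cast_ofNat] at h

end Masses

section CenterOfMass
variable {N n : ℕ} {mass : Fin N → ℝ}

lemma cmass_pos (hm : ∀ i, 0 < mass i) {C : Finset (Fin N)} (hC : C.Nonempty) :
    0 < cmass mass C :=
  sum_pos (fun i _ => hm i) hC

lemma cmass_smul_com (hm : ∀ i, 0 < mass i) {C : Finset (Fin N)} (hC : C.Nonempty)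
    (x : Conf N n) : cmass mass C • com mass C x = ∑ i ∈ C, mass i • x i := by
  rw [com, smul_smul, mul_inv_cancel₀ (cmass_pos hm hC).ne', one_smul]

lemma com_univ_eq_zero {x : Conf N n} (hx : x ∈ X0 mass) : com mass univ x = 0 := by
  rw [com, show ∑ i, mass i • x i = 0 from hx, smul_zero]

lemma com_sub_com_union (hm : ∀ i, 0 < mass i) {Ca Cb : Finset (Fin N)} (hab : Disjoint Ca Cb)
    (hCa : Ca.Nonempty) (hCb : Cb.Nonempty) (x : Conf N n) :
    com mass Ca x - com mass (Ca ∪ Cb) x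
      = (cmass mass Cb / (cmass mass Ca + cmass mass Cb)) • (com mass Ca x - com mass Cb x) := by
  have hMab : cmass mass Ca + cmass mass Cb ≠ 0 :=
    (add_pos (cmass_pos hm hCa) (cmass_pos hm hCb)).ne'
  have hunion : com mass (Ca ∪ Cb) x = (cmass mass Ca + cmass mass Cb)⁻¹
      • (cmass mass Ca • com mass Ca x + cmass mass Cb • com mass Cb x) := by
    rw [com, cmass, sum_union hab, sum_union hab, cmass_smul_com hm hCa, cmass_smul_com hm hCb]
    rfl
  rw [hunion]
  match_scalars
  · field_simp
    ring
  · field_simp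

lemma norm_com_sub_com_union_le (hm : ∀ i, 0 < mass i) {Ca Cb : Finset (Fin N)}
    (hab : Disjoint Ca Cb) (hCa : Ca.Nonempty) (hCb : Cb.Nonempty) (x : Conf N n) :
    ‖com mass Ca x - com mass (Ca ∪ Cb) x‖ ≤ ‖com mass Ca x - com mass Cb x‖ := by
  have hMa := cmass_pos hm hCa
  have hMb := cmass_pos hm hCb
  rw [com_sub_com_union hm hab hCa hCb x, norm_smul, Real.norm_of_nonneg (by positivity)]
  exact mul_le_of_le_one_left (norm_nonneg _) ((div_le_one (by positivity)).2 (by linarith))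

end CenterOfMass

section Projections
variable {N n : ℕ} {mass : Fin N → ℝ}

lemma PcZ_apply (Z : Partn N) (x : Conf N n) {E : Finset (Fin N)} (hE : E ∈ Z.parts)
    {i : Fin N} (hi : i ∈ E) : PcZ mass Z x i = com mass E x := by
  rw [PcZ, sum_eq_single_of_mem E hE fun F hF hFE =>
    if_neg fun hiF => hFE (Z.eq_of_mem_parts hF hE hiF hi), if_pos hi]

lemma P0Z_apply (Z : Partn N) (x : Conf N n) {E : Finset (Fin N)} (hE : E ∈ Z.parts)
    {i : Fin N} (hi : i ∈ E) : P0Z mass Z x i = x i - com mass E x := by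
  rw [P0Z, Pi.sub_apply, PcZ_apply Z x hE hi]

lemma minner_P0Z_eq_zero (hm : ∀ i, 0 < mass i) (Z : Partn N) (x : Conf N n) {y : Conf N n}
    (hy : ∀ E ∈ Z.parts, ∃ c, ∀ i ∈ E, y i = c) : minner mass (P0Z mass Z x) y = 0 := by
  rw [minner, ← Z.biUnion_parts, sum_biUnion Z.disjoint]
  refine sum_eq_zero fun E hE => ?_
  obtain ⟨c, hc⟩ := hy E hE
  have hterm : ∀ i ∈ E,
      mass i * ⟪P0Z mass Z x i, y i⟫ = ⟪mass i • (x i - com mass E x), c⟫ :=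
    fun i hi => by rw [P0Z_apply Z x hE hi, hc i hi, real_inner_smul_left]
  rw [id, sum_congr rfl hterm, ← sum_inner]
  simp only [smul_sub, sum_sub_distrib, ← sum_smul]
  rw [← cmass, cmass_smul_com hm (Z.nonempty_of_mem_parts hE), sub_self, inner_zero_left]

lemma minner_self_eq_P0Z_add_PcZ (hm : ∀ i, 0 < mass i) (Z : Partn N) (x : Conf N n) :
    minner mass x x = minner mass (P0Z mass Z x) (P0Z mass Z x)
      + minner mass (PcZ mass Z x) (PcZ mass Z x) := by
  conv_lhs => rw [show x = P0Z mass Z x + PcZ mass Z x from (sub_add_cancel _ _).symm]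
  exact minner_add_self_of_minner_eq_zero <| minner_P0Z_eq_zero hm Z x
    fun E hE => ⟨com mass E x, fun i hi => PcZ_apply Z x hE hi⟩

lemma PcZ_eq_zero_of_card_le_one (Z : Partn N) (hZ : #Z.parts ≤ 1) {x : Conf N n}
    (hx : x ∈ X0 mass) : PcZ mass Z x = 0 := by
  funext i
  obtain ⟨E, hE, hi⟩ := Z.exists_mem (mem_univ i)
  have hEuniv : E = univ := eq_univ_of_forall fun k => by
    obtain ⟨F, hF, hk⟩ := Z.exists_mem (mem_univ k)
    rwa [card_le_one.1 hZ E hE F hF]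
  rw [PcZ_apply Z x hE hi, hEuniv, com_univ_eq_zero hx, Pi.zero_apply]

end Projections

namespace Finpartition
variable {α : Type*} [DecidableEq α] {s : Finset α} (P : Finpartition s) {a b : Finset α}

def merge (ha : a ∈ P.parts) (hb : b ∈ P.parts) (hab : a ≠ b) : Finpartition s where
  parts := insert (a ∪ b) ((P.parts.erase a).erase b)
  supIndep := by
    rw [supIndep_iff_pairwiseDisjoint, coe_insert]
    have hrest : ∀ c ∈ (P.parts.erase a).erase b, Disjoint (a ∪ b) c := by
      intro c hc
      obtain ⟨hcb, hca, hc⟩ := by simpa only [mem_erase] using hc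
      exact disjoint_union_left.2
        ⟨P.disjoint ha hc (Ne.symm hca), P.disjoint hb hc (Ne.symm hcb)⟩
    refine Set.PairwiseDisjoint.insert (f := id) ?_ fun c hc _ => hrest c hc
    exact P.disjoint.subset fun c hc => mem_of_mem_erase (mem_of_mem_erase hc)
  sup_parts := by
    have h := P.sup_parts
    rw [← insert_erase ha, ← insert_erase (mem_erase.2 ⟨hab.symm, hb⟩), sup_insert,
      sup_insert, ← sup_assoc] at h
    rw [sup_insert]
    exact h
  bot_notMem := by
    rw [mem_insert, not_or]
    exact ⟨fun h => (P.ne_bot ha) (le_bot_iff.1 (h ▸ le_sup_left)),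
      fun h => P.bot_notMem (mem_of_mem_erase (mem_of_mem_erase h))⟩

variable {P}

lemma union_mem_merge (ha : a ∈ P.parts) (hb : b ∈ P.parts) (hab : a ≠ b) :
    a ∪ b ∈ (P.merge ha hb hab).parts :=
  mem_insert_self _ _

lemma mem_merge_of_ne {c : Finset α} (ha : a ∈ P.parts) (hb : b ∈ P.parts) (hab : a ≠ b)
    (hc : c ∈ P.parts) (hca : c ≠ a) (hcb : c ≠ b) : c ∈ (P.merge ha hb hab).parts :=
  mem_insert_of_mem (mem_erase.2 ⟨hcb, mem_erase.2 ⟨hca, hc⟩⟩)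

lemma card_merge (ha : a ∈ P.parts) (hb : b ∈ P.parts) (hab : a ≠ b) :
    #(P.merge ha hb hab).parts = #P.parts - 1 := by
  have hb' : b ∈ P.parts.erase a := mem_erase.2 ⟨hab.symm, hb⟩
  have hnew : a ∪ b ∉ (P.parts.erase a).erase b := fun h => by
    obtain ⟨hb', ha', h⟩ := by simpa only [mem_erase] using h
    obtain ⟨i, hi⟩ := P.nonempty_of_mem_parts ha
    exact disjoint_left.1 (P.disjoint h ha ha') (mem_union_left b hi) hi
  rw [merge, card_insert_of_notMem hnew, card_erase_of_mem hb', card_erase_of_mem ha]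
  have := card_pos.2 ⟨b, hb'⟩
  rw [card_erase_of_mem ha] at this
  omega

lemma exists_mem_notMem_of_one_lt_card {c : Finset α} (hc : c ∈ P.parts) (hP : 1 < #P.parts) :
    ∃ k ∈ s, k ∉ c := by
  obtain ⟨d, hd, hdc⟩ := exists_mem_ne hP c
  obtain ⟨k, hk⟩ := P.nonempty_of_mem_parts hd
  exact ⟨k, P.subset hd hk, disjoint_left.1 (P.disjoint hd hc hdc) hk⟩

end Finpartition

section MergeProjections
variable {N n : ℕ} {mass : Fin N → ℝ} {Z : Partn N} {Ca Cb : Finset (Fin N)}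

lemma PcZ_sub_PcZ_merge_apply (ha : Ca ∈ Z.parts) (hb : Cb ∈ Z.parts) (hab : Ca ≠ Cb)
    (x : Conf N n) {E : Finset (Fin N)} (hE : E ∈ Z.parts) {i : Fin N} (hi : i ∈ E) :
    (PcZ mass Z x - PcZ mass (Z.merge ha hb hab) x) i
      = com mass E x - com mass (if E = Ca ∨ E = Cb then Ca ∪ Cb else E) x := by
  have hunion := Finpartition.union_mem_merge ha hb hab
  rw [Pi.sub_apply, PcZ_apply Z x hE hi]
  by_cases hEa : E = Ca
  · rw [if_pos (Or.inl hEa), PcZ_apply _ x hunion (mem_union_left _ (hEa ▸ hi))]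
  by_cases hEb : E = Cb
  · rw [if_pos (Or.inr hEb), PcZ_apply _ x hunion (mem_union_right _ (hEb ▸ hi))]
  rw [if_neg (not_or.2 ⟨hEa, hEb⟩),
    PcZ_apply _ x (Finpartition.mem_merge_of_ne ha hb hab hE hEa hEb) hi]

lemma minner_P0Z_merge (hm : ∀ i, 0 < mass i) (ha : Ca ∈ Z.parts) (hb : Cb ∈ Z.parts)
    (hab : Ca ≠ Cb) (x : Conf N n) :
    minner mass (P0Z mass (Z.merge ha hb hab) x) (P0Z mass (Z.merge ha hb hab) x)
      = minner mass (P0Z mass Z x) (P0Z mass Z x)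
        + minner mass (PcZ mass Z x - PcZ mass (Z.merge ha hb hab) x)
            (PcZ mass Z x - PcZ mass (Z.merge ha hb hab) x) := by
  rw [P0Z, ← sub_add_sub_cancel x (PcZ mass Z x), ← P0Z]
  exact minner_add_self_of_minner_eq_zero <| minner_P0Z_eq_zero hm Z x fun E hE =>
    ⟨_, fun i hi => PcZ_sub_PcZ_merge_apply ha hb hab x hE hi⟩

lemma minner_PcZ_sub_PcZ_merge_le (hm : ∀ i, 0 < mass i) (ha : Ca ∈ Z.parts)
    (hb : Cb ∈ Z.parts) (hab : Ca ≠ Cb) (x : Conf N n) :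
    minner mass (PcZ mass Z x - PcZ mass (Z.merge ha hb hab) x)
        (PcZ mass Z x - PcZ mass (Z.merge ha hb hab) x)
      ≤ totalMass mass * ‖com mass Ca x - com mass Cb x‖ ^ 2 := by
  have hdisj : Disjoint Ca Cb := Z.disjoint ha hb hab
  have hCa := Z.nonempty_of_mem_parts ha
  have hCb := Z.nonempty_of_mem_parts hb
  rw [minner_self_eq_sum, totalMass, sum_mul]
  refine sum_le_sum fun i _ => mul_le_mul_of_nonneg_left (pow_le_pow_left₀ (norm_nonneg _) ?_ 2)
    (hm i).le
  obtain ⟨E, hE, hi⟩ := Z.exists_mem (mem_univ i)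
  rw [PcZ_sub_PcZ_merge_apply ha hb hab x hE hi]
  by_cases hEa : E = Ca
  · rw [if_pos (Or.inl hEa), hEa]
    exact norm_com_sub_com_union_le hm hdisj hCa hCb x
  by_cases hEb : E = Cb
  · rw [if_pos (Or.inr hEb), hEb, union_comm, norm_sub_rev (com mass Ca x)]
    exact norm_com_sub_com_union_le hm hdisj.symm hCb hCa x
  rw [if_neg (not_or.2 ⟨hEa, hEb⟩), sub_self, norm_zero]
  exact norm_nonneg _

end MergeProjections

section Cones
variable {N n : ℕ} {mass : Fin N → ℝ}

lemma cone_subset_X0 {Z : Partn N} {κ : ℝ} : cone (n := n) mass Z κ ⊆ X0 mass := by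
  rw [cone]
  split_ifs <;> exact Set.sep_subset _ _

lemma cone_mono {Z : Partn N} {κ κ₁ : ℝ} (h : κ ≤ κ₁) :
    cone (n := n) mass Z κ ⊆ cone mass Z κ₁ := by
  rw [cone, cone]
  split_ifs
  · exact fun x hx => ⟨hx.1, hx.2.trans (mul_le_mul_of_nonneg_right h (Real.sqrt_nonneg _))⟩
  · exact fun x hx => ⟨hx.1, hx.2.trans h⟩

lemma minner_P0Z_le_of_mem_cone (hm : ∀ i, 0 < mass i) {Z : Partn N} (hZ : 1 < #Z.parts)
    {κ : ℝ} (hκ : 0 ≤ κ) {x : Conf N n} (hx : x ∈ cone mass Z κ) :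
    minner mass (P0Z mass Z x) (P0Z mass Z x) ≤ κ ^ 2 * minner mass x x := by
  rw [cone, if_pos hZ] at hx
  have hcone := (mnorm_le_mul_mnorm_iff (fun i => (hm i).le) hκ _ _).1 hx.2
  have hP0 := minner_self_nonneg (fun i => (hm i).le) (P0Z mass Z x)
  nlinarith [minner_self_eq_P0Z_add_PcZ hm Z x, mul_nonneg (sq_nonneg κ) hP0]

/-- For the trivial partition the cone is a ball and leaving it only gives `x ≠ 0`, which
suffices because then `P_c(Z)x = 0` and `P₀(Z)x = x`. -/
lemma sq_mul_minner_PcZ_lt_of_notMem_cone (hm : ∀ i, 0 < mass i) (Z : Partn N) {κ : ℝ}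
    (hκ : 0 ≤ κ) {x : Conf N n} (hx0 : x ∈ X0 mass) (hx : x ∉ cone mass Z κ) :
    κ ^ 2 * minner mass (PcZ mass Z x) (PcZ mass Z x)
      < minner mass (P0Z mass Z x) (P0Z mass Z x) := by
  rw [cone] at hx
  split_ifs at hx with hZ
  · exact lt_of_not_ge fun h =>
      hx ⟨hx0, (mnorm_le_mul_mnorm_iff (fun i => (hm i).le) hκ _ _).2 h⟩
  · have hPc := PcZ_eq_zero_of_card_le_one Z (not_lt.1 hZ) hx0
    have hpos : 0 < mnorm mass x := hκ.trans_lt (lt_of_not_ge fun h => hx ⟨hx0, h⟩)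
    rw [P0Z, hPc, sub_zero]
    simpa [minner] using Real.sqrt_pos.1 hpos

lemma mass_mul_add_mass_mul_le_minner_P0Z (hm : ∀ i, 0 < mass i) (Z : Partn N)
    {E F : Finset (Fin N)} (hE : E ∈ Z.parts) (hF : F ∈ Z.parts) {i j : Fin N} (hij : i ≠ j)
    (hi : i ∈ E) (hj : j ∈ F) (x : Conf N n) :
    mass i * ‖x i - com mass E x‖ ^ 2 + mass j * ‖x j - com mass F x‖ ^ 2
      ≤ minner mass (P0Z mass Z x) (P0Z mass Z x) := by
  rw [minner_self_eq_sum, ← P0Z_apply Z x hE hi, ← P0Z_apply Z x hF hj,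
    ← sum_pair hij (f := fun k => mass k * ‖P0Z mass Z x k‖ ^ 2)]
  exact sum_le_sum_of_subset_of_nonneg (subset_univ _)
    fun k _ _ => mul_nonneg (hm k).le (sq_nonneg _)

lemma minMass_mul_norm_com_sub_com_sq_le (hm : ∀ i, 0 < mass i) {Z Ztil : Partn N}
    {Ca Cb C : Finset (Fin N)} (ha : Ca ∈ Z.parts) (hb : Cb ∈ Z.parts) (hC : C ∈ Ztil.parts)
    {i j : Fin N} (hij : i ≠ j) (hia : i ∈ Ca) (hjb : j ∈ Cb) (hiC : i ∈ C) (hjC : j ∈ C)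
    (x : Conf N n) :
    minMass mass * ‖com mass Ca x - com mass Cb x‖ ^ 2
      ≤ 4 * (minner mass (P0Z mass Z x) (P0Z mass Z x)
        + minner mass (P0Z mass Ztil x) (P0Z mass Ztil x)) := by
  have : Nonempty (Fin N) := ⟨i⟩
  have hZ := mass_mul_add_mass_mul_le_minner_P0Z hm Z ha hb hij hia hjb x
  have hZtil := mass_mul_add_mass_mul_le_minner_P0Z hm Ztil hC hC hij hiC hjC x
  set u₁ := ‖x i - com mass Ca x‖
  set u₂ := ‖x i - com mass C x‖
  set u₃ := ‖x j - com mass C x‖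
  set u₄ := ‖x j - com mass Cb x‖
  have htri : ‖com mass Ca x - com mass Cb x‖ ≤ u₁ + u₂ + u₃ + u₄ := by
    calc ‖com mass Ca x - com mass Cb x‖
        ≤ ‖com mass Ca x - x i‖ + ‖x i - com mass Cb x‖ :=
          norm_sub_le_norm_sub_add_norm_sub _ _ _
      _ ≤ ‖com mass Ca x - x i‖ + (‖x i - com mass C x‖
            + (‖com mass C x - x j‖ + ‖x j - com mass Cb x‖)) := by
        gcongr
        exact (norm_sub_le_norm_sub_add_norm_sub _ _ _).trans
          (add_le_add_right (norm_sub_le_norm_sub_add_norm_sub _ _ _) _)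
      _ = u₁ + u₂ + u₃ + u₄ := by
        rw [norm_sub_rev (com mass Ca x), norm_sub_rev (com mass C x)]
        ring
  have hsq : ‖com mass Ca x - com mass Cb x‖ ^ 2
      ≤ 4 * (u₁ ^ 2 + u₂ ^ 2 + u₃ ^ 2 + u₄ ^ 2) := by
    nlinarith [norm_nonneg (com mass Ca x - com mass Cb x), sq_nonneg (u₁ - u₂),
      sq_nonneg (u₁ - u₃), sq_nonneg (u₁ - u₄), sq_nonneg (u₂ - u₃),
      sq_nonneg (u₂ - u₄), sq_nonneg (u₃ - u₄)]
  have hmi := minMass_le (mass := mass) i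
  have hmj := minMass_le (mass := mass) j
  nlinarith [minMass_pos hm, sq_nonneg u₁, sq_nonneg u₂, sq_nonneg u₃, sq_nonneg u₄]

lemma minMass_mul_minner_PcZ_sub_PcZ_merge_le (hm : ∀ i, 0 < mass i) {Z Ztil : Partn N}
    {Ca Cb C : Finset (Fin N)} (ha : Ca ∈ Z.parts) (hb : Cb ∈ Z.parts) (hab : Ca ≠ Cb)
    (hC : C ∈ Ztil.parts) {i j : Fin N} (hij : i ≠ j) (hia : i ∈ Ca) (hjb : j ∈ Cb)
    (hiC : i ∈ C) (hjC : j ∈ C) (x : Conf N n) :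
    minMass mass * minner mass (PcZ mass Z x - PcZ mass (Z.merge ha hb hab) x)
        (PcZ mass Z x - PcZ mass (Z.merge ha hb hab) x)
      ≤ 4 * totalMass mass * (minner mass (P0Z mass Z x) (P0Z mass Z x)
        + minner mass (P0Z mass Ztil x) (P0Z mass Ztil x)) := by
  have : Nonempty (Fin N) := ⟨i⟩
  calc _ ≤ minMass mass * (totalMass mass * ‖com mass Ca x - com mass Cb x‖ ^ 2) :=
        mul_le_mul_of_nonneg_left (minner_PcZ_sub_PcZ_merge_le hm ha hb hab x) (minMass_pos hm).le
    _ = totalMass mass * (minMass mass * ‖com mass Ca x - com mass Cb x‖ ^ 2) := by ring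
    _ ≤ totalMass mass * (4 * (minner mass (P0Z mass Z x) (P0Z mass Z x)
          + minner mass (P0Z mass Ztil x) (P0Z mass Ztil x))) :=
        mul_le_mul_of_nonneg_left
          (minMass_mul_norm_com_sub_com_sq_le hm ha hb hC hij hia hjb hiC hjC x)
          (totalMass_pos hm).le
    _ = _ := by ring

end Cones

namespace AZS
variable {N : ℕ} {mass : Fin N → ℝ} {κ κ' dd : ℕ → ℝ}

lemma sq_mul_two_add_sq_lt (h : AZS mass κ κ' dd) {l : ℕ} (hl : 1 ≤ l) :
    κ (l + 1) ^ 2 * (2 + κ (l + 1) ^ 2)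
      < minMass mass ^ 3 / totalMass mass ^ 3
        * ((κ' l ^ 2 - κ (l + 1) ^ 2) / (1 + κ' l ^ 2)) := by
  obtain ⟨-, hd, hd'⟩ := h.2 l hl
  linarith

lemma kappa_succ_lt [Nonempty (Fin N)] (hm : ∀ i, 0 < mass i) (h : AZS mass κ κ' dd) {l : ℕ}
    (hl : 1 ≤ l) : κ (l + 1) < κ l := by
  have hk := (h.1 (l + 1)).1
  have hmM : 0 < minMass mass ^ 3 / totalMass mass ^ 3 :=
    div_pos (pow_pos (minMass_pos hm) 3) (pow_pos (totalMass_pos hm) 3)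
  have hR : 0 < (κ' l ^ 2 - κ (l + 1) ^ 2) / (1 + κ' l ^ 2) :=
    pos_of_mul_pos_right ((by positivity : (0 : ℝ) < _).trans (h.sq_mul_two_add_sq_lt hl))
      hmM.le
  have hsq : κ (l + 1) ^ 2 < κ' l ^ 2 := by
    have := (div_pos_iff_of_pos_right (by positivity : (0 : ℝ) < 1 + κ' l ^ 2)).1 hR
    linarith
  exact (lt_of_pow_lt_pow_left₀ 2 (h.1 l).2.1.le hsq).trans (h.2 l hl).1

lemma kappa_antitoneOn [Nonempty (Fin N)] (hm : ∀ i, 0 < mass i) (h : AZS mass κ κ' dd) :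
    AntitoneOn κ {l | 1 ≤ l} :=
  antitoneOn_nat_Ici_of_succ_le fun _ hl => (h.kappa_succ_lt hm hl).le

end AZS

/-- The arithmetic core: with `s = m/M ≤ 1/3`, the estimates force `s·R < (8 + s)·k²` for
`R = (q² − k²)/(1 + q²)`, while the Antonets–Zhislin–Shereshevskij inequality gives
`s³·R > 2k²`; together `2 < s²(8 + s) ≤ 25/27`. -/
lemma false_of_merge_estimates {m M k q T A D A' P' : ℝ} (hm : 0 < m) (h3m : 3 * m ≤ M)
    (hazs : k ^ 2 * (2 + k ^ 2) < m ^ 3 / M ^ 3 * ((q ^ 2 - k ^ 2) / (1 + q ^ 2)))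
    (hT : T = A' + P') (hA' : A' = A + D) (hA : A ≤ k ^ 2 * T) (hD : m * D ≤ 8 * M * k ^ 2 * T)
    (hP' : 0 ≤ P') (hq : q ^ 2 * P' < A') : False := by
  have hM : 0 < M := by linarith
  have hq1 : 0 < 1 + q ^ 2 := by positivity
  have hTpos : 0 < T := by nlinarith [sq_nonneg q]
  set R := (q ^ 2 - k ^ 2) / (1 + q ^ 2) with hR
  have hR1 : R * (1 + q ^ 2) = q ^ 2 - k ^ 2 := div_mul_cancel₀ _ hq1.ne'
  have hlow : (R - k ^ 2) * T < D := by nlinarith [mul_nonneg (sq_nonneg k) hTpos.le]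
  have hsR : m * R < (8 * M + m) * k ^ 2 := by
    have : m * (R - k ^ 2) * T < 8 * M * k ^ 2 * T := by nlinarith
    nlinarith
  have hazs' : k ^ 2 * (2 + k ^ 2) * M ^ 3 < m ^ 3 * R := by
    rw [div_mul_eq_mul_div, lt_div_iff₀ (by positivity)] at hazs
    exact hazs
  have hcub : (2 + k ^ 2) * M ^ 3 < m ^ 2 * (8 * M + m) := by
    have := mul_lt_mul_of_pos_left hsR (pow_pos hm 2)
    refine lt_of_mul_lt_mul_left ?_ (sq_nonneg k)
    nlinarith
  have hM3 : 9 * m ^ 2 * M ≤ M ^ 3 := by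
    nlinarith [mul_nonneg (mul_nonneg hM.le (sub_nonneg.2 h3m)) (by positivity : 0 ≤ M + 3 * m)]
  nlinarith [sq_nonneg k, pow_pos hM 3]

theorem stmt_15_general (N n : ℕ)
    (mass : Fin N → ℝ) (hm : ∀ i, 0 < mass i)
    (κ κ' dd : ℕ → ℝ) (hAZS : AZS mass κ κ' dd)
    (Z : Partn N) (hZ : 2 ≤ Z.parts.card)
    (C : Finset (Fin N)) (hC : C.Nonempty)
    (hsplit : ∀ C' ∈ Z.parts, ¬ C ⊆ C')
    (Ztil : Partn N) (hCZtil : C ∈ Ztil.parts)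
    (hcard : Z.parts.card ≤ Ztil.parts.card) :
    cone mass Ztil (κ Ztil.parts.card) ∩ Mreg (n := n) mass κ' κ Z = ∅ := by
  refine Set.eq_empty_of_forall_notMem fun x ⟨hxZtil, hxZ, hxU⟩ => ?_
  obtain ⟨i, hiC⟩ := hC
  obtain ⟨Ca, ha, hia⟩ := Z.exists_mem (mem_univ i)
  obtain ⟨j, hjC, hja⟩ := not_subset.1 (hsplit Ca ha)
  obtain ⟨Cb, hb, hjb⟩ := Z.exists_mem (mem_univ j)
  have hab : Ca ≠ Cb := by rintro rfl; exact hja hjb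
  have hij : i ≠ j := by rintro rfl; exact hja hia
  obtain ⟨k, -, hkC⟩ := Ztil.exists_mem_notMem_of_one_lt_card hCZtil (by omega)
  have : Nonempty (Fin N) := ⟨i⟩
  have h3m := three_mul_minMass_le_totalMass hm hij
    (ne_of_mem_of_not_mem hiC hkC) (ne_of_mem_of_not_mem hjC hkC)
  set Z' := Z.merge ha hb hab
  have hZ' : x ∉ cone mass Z' (κ' #Z'.parts) := fun h => hxU <| Set.mem_iUnion₂.2
    ⟨Z', by rw [Finpartition.card_merge]; omega, h⟩
  have hκ := hAZS.kappa_antitoneOn hm (by grind) (by grind) hcard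
  have hκpos := (hAZS.1 #Z.parts).1
  have hA := minner_P0Z_le_of_mem_cone hm hZ hκpos.le hxZ
  have hAtil := minner_P0Z_le_of_mem_cone hm (by omega) hκpos.le (cone_mono hκ hxZtil)
  have hD : minMass mass
        * minner mass (PcZ mass Z x - PcZ mass Z' x) (PcZ mass Z x - PcZ mass Z' x)
      ≤ 8 * totalMass mass * κ #Z.parts ^ 2 * minner mass x x := by
    have := minMass_mul_minner_PcZ_sub_PcZ_merge_le hm ha hb hab hCZtil hij hia hjb hiC hjC x
    nlinarith [totalMass_pos hm]
  have hazs := hAZS.sq_mul_two_add_sq_lt (l := #Z.parts - 1) (by omega)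
  rw [Nat.sub_add_cancel (by omega)] at hazs
  refine false_of_merge_estimates (minMass_pos hm) h3m hazs (minner_self_eq_P0Z_add_PcZ hm Z' x)
    (minner_P0Z_merge hm ha hb hab x) hA hD (minner_self_nonneg (fun l => (hm l).le) _) ?_
  rw [← Finpartition.card_merge ha hb hab]
  exact sq_mul_minner_PcZ_lt_of_notMem_cone hm Z' (hAZS.1 _).2.1.le
    (cone_subset_X0 hxZ) hZ'

theorem stmt_15 (N n : ℕ) (hN : 2 ≤ N) (hn : 1 ≤ n)
    (mass : Fin N → ℝ) (hm : ∀ i, 0 < mass i)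
    (κ κ' dd : ℕ → ℝ) (hAZS : AZS mass κ κ' dd)
    (Z : Partn N) (hZ : 2 ≤ Z.parts.card)
    (C : Finset (Fin N)) (hC : C.Nonempty)
    (hsplit : ∀ C' ∈ Z.parts, ¬ C ⊆ C')
    (Ztil : Partn N) (hCZtil : C ∈ Ztil.parts)
    (hcard : Z.parts.card ≤ Ztil.parts.card) :
    cone mass Ztil (κ Ztil.parts.card) ∩ Mreg (n := n) mass κ' κ Z = ∅ :=
  stmt_15_general N n mass hm κ κ' dd hAZS Z hZ C hC hsplit Ztil hCZtil hcard
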